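/- (Lemma 2.4, Kechris) Let A ⊆ ᵚω be an analytic set (with respect to the product topology on ᵚω, where ℕ is discrete). Then the following are equivalent: (1) there exists a Miller tree p with [p] ⊆ A; (2) A is unbounded in (ᵚω, ≤*), i.e. there is no g ∈ ᵚω with f ≤* g for every f ∈ A. -/

import Mathlib

/-- A tree on `ω^{<ω}`: a set of finite sequences closed under initial segments. -/
def IsTree (p : Set (List ℕ)) : Prop := ∀ s ∈ p, ∀ t : List ℕ, t <+: s → t ∈ p

/-- `Succs p s` is the set of `n` with `s ⌢ ⟨n⟩ ∈ p`. -/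
def Succs (p : Set (List ℕ)) (s : List ℕ) : Set ℕ := {n | s ++ [n] ∈ p}

/-- The set of branches of `p`: all `η : ℕ → ℕ` all of whose initial segments lie in `p`. -/
def Branches (p : Set (List ℕ)) : Set (ℕ → ℕ) := {η | ∀ n, (List.range n).map η ∈ p}

/-- `p` is a Miller tree. -/
def IsMillerTree (p : Set (List ℕ)) : Prop :=
  IsTree p ∧ (∃ st ∈ p, ∀ s ∈ p, s <+: st ∨ st <+: s) ∧
    ∀ s ∈ p, ∃ t ∈ p, s <+: t ∧ (Succs p t).Infinite

/-- The Miller ideal `m⁰`. -/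
def MillerIdeal (X : Set (ℕ → ℕ)) : Prop :=
  ∀ p, IsMillerTree p → ∃ q, IsMillerTree q ∧ q ⊆ p ∧ X ∩ Branches q = ∅

/-- `f ≤* g` : `f n ≤ g n` for all but finitely many `n`. -/
def EvLE (f g : ℕ → ℕ) : Prop := {n : ℕ | ¬ f n ≤ g n}.Finite


open List Set Classical

noncomputable section KM

/-- restriction of `η` to length `n` -/
def res (η : ℕ → ℕ) (n : ℕ) : List ℕ := (List.range n).map η

lemma res_length (η : ℕ → ℕ) (n : ℕ) : (res η n).length = n := by simp [res]

lemma res_getElem (η : ℕ → ℕ) {n i : ℕ} (h : i < n) :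
    (res η n)[i]'(by simp [res, h]) = η i := by simp [res]

lemma res_prefix (η : ℕ → ℕ) {n m : ℕ} (h : n ≤ m) : res η n <+: res η m := by
  unfold res
  rw [show List.range n = List.take n (List.range m) by
    rw [List.take_range]; congr 1; omega]
  exact List.IsPrefix.map η (List.take_prefix _ _)

lemma prefix_ext {s t : List ℕ} (hlen : s.length ≤ t.length)
    (h : ∀ i (hi : i < s.length), s[i] = t[i]'(lt_of_lt_of_le hi hlen)) : s <+: t := by
  rw [List.prefix_iff_eq_take]
  apply List.ext_getElem (by simp [hlen])
  intro i h1 h2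
  rw [List.getElem_take]
  exact h i h1

lemma prefix_res_iff {t : List ℕ} {η : ℕ → ℕ} {n : ℕ} :
    t <+: res η n ↔ t.length ≤ n ∧ ∀ i (hi : i < t.length), t[i] = η i := by
  constructor
  · intro h
    have hl := h.length_le
    rw [res_length] at hl
    refine ⟨hl, fun i hi => ?_⟩
    rw [h.getElem hi, res_getElem _ (lt_of_lt_of_le hi hl)]
  · rintro ⟨hl, h⟩
    refine prefix_ext (by simpa [res_length] using hl) ?_
    intro i hi
    rw [h i hi, res_getElem _ (lt_of_lt_of_le hi hl)]

lemma res_eq_of_prefix {t : List ℕ} {η : ℕ → ℕ} {n : ℕ} (h : t <+: res η n) :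
    res η t.length = t := by
  rcases prefix_res_iff.1 h with ⟨hl, hv⟩
  apply List.ext_getElem (by simp [res_length])
  intro i h1 h2
  rw [res_getElem _ (by simpa [res_length] using h1), hv i h2]

def Bdd (B : Set (ℕ → ℕ)) : Prop := ∃ g, ∀ f ∈ B, EvLE f g

lemma evle_of_le_from {f g h : ℕ → ℕ} {N : ℕ} (hf : EvLE f g)
    (hg : ∀ m, N ≤ m → g m ≤ h m) : EvLE f h := by
  apply Set.Finite.subset (Set.Finite.union hf (Set.finite_Iio N))
  intro m hm
  simp only [Set.mem_setOf_eq] at hm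
  by_cases hmN : m < N
  · exact Or.inr hmN
  · exact Or.inl (fun hle => hm (le_trans hle (hg m (by omega))))

/-- countable unions of bounded sets are bounded -/
lemma bdd_iUnion {B : ℕ → Set (ℕ → ℕ)} (h : ∀ n, Bdd (B n)) : Bdd (⋃ n, B n) := by
  choose g hg using h
  refine ⟨fun m => Finset.sup (Finset.range (m+1)) (fun n => g n m), ?_⟩
  rintro f ⟨_, ⟨n, rfl⟩, hf⟩
  refine evle_of_le_from (hg n f hf) (N := n) ?_
  intro m hm
  exact Finset.le_sup (f := fun n => g n m) (by simp; omega)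

lemma bdd_sUnion {P : List ℕ → Prop} {B : List ℕ → Set (ℕ → ℕ)}
    (h : ∀ σ, P σ → Bdd (B σ)) : Bdd (⋃ σ ∈ {σ | P σ}, B σ) := by
  have : (⋃ σ ∈ {σ | P σ}, B σ) ⊆ ⋃ n : ℕ,
      (if P (Denumerable.ofNat (List ℕ) n) then B (Denumerable.ofNat (List ℕ) n) else ∅) := by
    rintro f ⟨_, ⟨σ, rfl⟩, hf⟩
    simp only [Set.mem_iUnion] at hf ⊢
    obtain ⟨hP, hfB⟩ := hf
    refine ⟨Encodable.encode σ, ?_⟩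
    rw [Denumerable.ofNat_encode]
    simp only [if_pos (show P σ from hP)]
    exact hfB
  have hb : ∀ n : ℕ, Bdd (if P (Denumerable.ofNat (List ℕ) n)
      then B (Denumerable.ofNat (List ℕ) n) else ∅) := by
    intro n
    by_cases hP : P (Denumerable.ofNat (List ℕ) n)
    · simpa [hP] using h _ hP
    · exact ⟨id, by simp [hP]⟩
  rcases bdd_iUnion hb with ⟨g, hg⟩
  exact ⟨g, fun f hf => hg f (this hf)⟩


lemma Bdd.mono {B C : Set (ℕ → ℕ)} (h : B ⊆ C) (hC : Bdd C) : Bdd B := by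
  rcases hC with ⟨g, hg⟩; exact ⟨g, fun f hf => hg f (h hf)⟩

/-- The basic clopen set of functions extending the finite sequence `t`. -/
def Cyl (t : List ℕ) : Set (ℕ → ℕ) := {f | res f t.length = t}

lemma Cyl_mono {t t' : List ℕ} (h : t <+: t') : Cyl t' ⊆ Cyl t := by
  intro f hf
  have hf' : res f t'.length = t' := hf
  have : t <+: res f t'.length := by rw [hf']; exact h
  exact res_eq_of_prefix this

lemma prefix_of_mem_Cyl {f : ℕ → ℕ} {t : List ℕ} {n : ℕ} (h : f ∈ Cyl t)
    (hn : t.length ≤ n) : t <+: res f n := by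
  have := res_prefix f hn
  rwa [h] at this

lemma mem_Cyl_iff {f : ℕ → ℕ} {t : List ℕ} :
    f ∈ Cyl t ↔ ∀ i (hi : i < t.length), f i = t[i] := by
  constructor
  · intro h i hi
    have h' : res f t.length = t := h
    have h2 := List.getElem_of_eq h'.symm hi
    rw [h2, res_getElem _ hi]
  · intro h
    apply List.ext_getElem (by simp [res_length])
    intro i h1 h2
    rw [res_getElem _ (by simpa [res_length] using h1)]
    exact h i h2

lemma res_mem_Cyl {f : ℕ → ℕ} {t : List ℕ} {n : ℕ} (h : t <+: res f n) : f ∈ Cyl t := by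
  exact res_eq_of_prefix h

/-- default extension of a finite sequence by zeros -/
def pad0 (σ : List ℕ) : ℕ → ℕ := fun i => σ.getD i 0

lemma ext0_mem (σ : List ℕ) : pad0 σ ∈ Cyl σ := by
  rw [mem_Cyl_iff]
  intro i hi
  simp [pad0, List.getD, List.getElem?_eq_getElem hi]

section Cont

variable {F : (ℕ → ℕ) → (ℕ → ℕ)} (hF : Continuous F)

include hF in
/-- finite continuity: some initial segment of `x` decides `F x` up to `ℓ` -/
lemma cont_dec (x : ℕ → ℕ) (ℓ k₀ : ℕ) :
    ∃ k, k₀ ≤ k ∧ ∀ y ∈ Cyl (res x k), res (F y) ℓ = res (F x) ℓ := by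
  classical
  set U : Set (ℕ → ℕ) := ⋂ i ∈ Finset.range ℓ, ({g : ℕ → ℕ | g i = F x i}) with hU
  have hUopen : IsOpen U := by
    apply isOpen_biInter_finset
    intro i _
    show IsOpen ((fun g : ℕ → ℕ => g i) ⁻¹' {F x i})
    exact (isOpen_discrete _).preimage (continuous_apply i)
  have hxU : F x ∈ U := by simp [hU]
  have hpre : IsOpen (F ⁻¹' U) := hUopen.preimage hF
  rcases isOpen_pi_iff.1 hpre x (by simpa using hxU) with ⟨I, u, hIu, hsub⟩
  refine ⟨max k₀ (I.sup id + 1), le_max_left _ _, ?_⟩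
  intro y hy
  have hyx : ∀ i ∈ I, y i = x i := by
    intro i hi
    have hik : i < max k₀ (I.sup id + 1) :=
      lt_of_le_of_lt (Finset.le_sup (f := id) hi) (by omega)
    have := (mem_Cyl_iff.1 hy) i (by simpa [res_length] using hik)
    rwa [res_getElem _ hik] at this
  have hyU : F y ∈ U := hsub (by
    intro i hi
    rw [hyx i hi]
    exact (hIu i hi).2)
  apply List.ext_getElem (by simp [res_length])
  intro i h1 h2
  have hiℓ : i < ℓ := by simpa [res_length] using h1
  rw [res_getElem _ hiℓ, res_getElem _ hiℓ]
  have := Set.mem_iInter₂.1 hyU i (by simpa using hiℓ)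
  exact this

/-- image of a cylinder -/
def Img (F : (ℕ → ℕ) → (ℕ → ℕ)) (σ : List ℕ) : Set (ℕ → ℕ) := F '' Cyl σ

/-- `σ` is good if its image is unbounded -/
def Good (F : (ℕ → ℕ) → (ℕ → ℕ)) (σ : List ℕ) : Prop := ¬ Bdd (Img F σ)

include hF in
/-- From a good node, find a proper good extension whose image is decided to length ≥ ℓ. -/
lemma good_ext {σ : List ℕ} (hσ : Good F σ) (ℓ : ℕ) :
    ∃ σ' t : List ℕ, σ <+: σ' ∧ σ.length < σ'.length ∧ Good F σ' ∧
      ℓ ≤ t.length ∧ Img F σ' ⊆ Cyl t := by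
  classical
  set P : List ℕ → Prop := fun σ' => σ <+: σ' ∧ σ.length < σ'.length ∧
    ∀ y ∈ Cyl σ', res (F y) ℓ = res (F (pad0 σ')) ℓ with hP
  have hcover : Img F σ ⊆ ⋃ σ' ∈ {σ' | P σ'}, Img F σ' := by
    rintro _ ⟨x, hx, rfl⟩
    rcases cont_dec hF x ℓ (σ.length + 1) with ⟨k, hk, hdec⟩
    have hσ'len : (res x k).length = k := res_length x k
    have hxσ' : x ∈ Cyl (res x k) := res_mem_Cyl (List.prefix_refl _)
    have hPσ' : P (res x k) := by
      refine ⟨?_, by omega, ?_⟩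
      · have := res_prefix x (show σ.length ≤ k by omega)
        rwa [show res x σ.length = σ from hx] at this
      · intro y hy
        rw [hdec y hy, hdec (pad0 (res x k)) (ext0_mem _)]
    exact Set.mem_biUnion hPσ' ⟨x, hxσ', rfl⟩
  have : ¬ ∀ σ', P σ' → ¬ Good F σ' := by
    intro hall
    apply hσ
    refine Bdd.mono hcover (bdd_sUnion ?_)
    intro σ' hPσ'
    have := hall σ' hPσ'
    simpa [Good, not_not] using this
  push_neg at this
  rcases this with ⟨σ', hPσ', hgood⟩
  refine ⟨σ', res (F (pad0 σ')) ℓ, hPσ'.1, hPσ'.2.1, hgood, by simp [res_length], ?_⟩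
  rintro _ ⟨y, hy, rfl⟩
  show res (F y) _ = _
  rw [res_length, hPσ'.2.2 y hy]

lemma Img_mono {σ σ' : List ℕ} (h : σ <+: σ') : Img F σ' ⊆ Img F σ :=
  Set.image_mono (Cyl_mono h)

lemma getD_eq_getElem' (t : List ℕ) {j : ℕ} (h : j < t.length) : t.getD j 0 = t[j] := by
  simp [List.getD, List.getElem?_eq_getElem h]

include hF in
/-- The splitting lemma: below a good node decided to `t`, there is a node `t*` extending `t`
with infinitely many one-point extensions each capturing the image of a good node. -/
lemma splitting {σ t : List ℕ} (hσ : Good F σ) (ht : Img F σ ⊆ Cyl t) :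
    ∃ tstar : List ℕ, t <+: tstar ∧ ∃ m : ℕ → ℕ, Function.Injective m ∧
      ∃ σc : ℕ → List ℕ, ∀ n, σ <+: σc n ∧ σ.length < (σc n).length ∧ Good F (σc n) ∧
        Img F (σc n) ⊆ Cyl (tstar ++ [m n]) := by
  classical
  by_cases hinf : ∃ tstar, t <+: tstar ∧
      {m | ∃ σ', σ <+: σ' ∧ Good F σ' ∧ Img F σ' ⊆ Cyl (tstar ++ [m])}.Infinite
  · rcases hinf with ⟨tstar, htt, hV⟩
    let e := Set.Infinite.natEmbedding _ hV
    refine ⟨tstar, htt, fun n => (e n : ℕ),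
      fun a b hab => e.injective (Subtype.ext hab), ?_⟩
    have hmem : ∀ n, ∃ σ', σ <+: σ' ∧ Good F σ' ∧
        Img F σ' ⊆ Cyl (tstar ++ [(e n : ℕ)]) := fun n => (e n).2
    choose σ1 hσ1p hσ1g hσ1i using hmem
    have hprop : ∀ n, ∃ σ'', σ1 n <+: σ'' ∧ (σ1 n).length < σ''.length ∧ Good F σ'' := by
      intro n
      rcases good_ext hF (hσ1g n) 0 with ⟨σ'', _, h1, h2, h3, _, _⟩
      exact ⟨σ'', h1, h2, h3⟩
    choose σ2 hσ2p hσ2l hσ2g using hprop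
    refine ⟨σ2, fun n => ⟨(hσ1p n).trans (hσ2p n), ?_, hσ2g n, ?_⟩⟩
    · have := (hσ1p n).length_le
      have := hσ2l n
      omega
    · exact (Img_mono (hσ2p n)).trans (hσ1i n)
  · exfalso
    push_neg at hinf
    -- the tree of decided nodes
    set T : Set (List ℕ) := {t' | t <+: t' ∧ ∃ σ', σ <+: σ' ∧ Good F σ' ∧ Img F σ' ⊆ Cyl t'}
      with hT
    have htT : t ∈ T := ⟨List.prefix_refl t, σ, List.prefix_refl σ, hσ, ht⟩
    -- levels of T are finite
    have hlevel : ∀ ℓ, {t' | t' ∈ T ∧ t'.length = ℓ}.Finite := by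
      intro ℓ
      rcases lt_or_ge ℓ t.length with hℓ | hℓ
      · apply Set.Finite.subset (Set.finite_empty)
        rintro t' ⟨⟨hpre, _⟩, hlen⟩
        exact absurd (hpre.length_le) (by omega)
      · obtain ⟨k, rfl⟩ : ∃ k, ℓ = t.length + k := ⟨ℓ - t.length, by omega⟩
        clear hℓ
        induction k with
        | zero =>
          apply Set.Finite.subset (Set.finite_singleton t)
          rintro t' ⟨⟨hpre, _⟩, hlen⟩
          exact (hpre.eq_of_length (by omega)).symm
        | succ k ih =>
          have hsub : {t' | t' ∈ T ∧ t'.length = t.length + (k+1)} ⊆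
              ⋃ u ∈ {t' | t' ∈ T ∧ t'.length = t.length + k},
                (fun a => u ++ [a]) '' {m | ∃ σ', σ <+: σ' ∧ Good F σ' ∧
                  Img F σ' ⊆ Cyl (u ++ [m])} := by
            rintro t' ⟨⟨hpre, σ', hσ'p, hσ'g, hσ'i⟩, hlen⟩
            have hne : t' ≠ [] := by
              intro h; rw [h] at hlen; simp at hlen
            have hdrop : t'.dropLast ++ [t'.getLast hne] = t' := List.dropLast_append_getLast hne
            have hdl : t'.dropLast <+: t' := List.dropLast_prefix t'
            have hdlen : t'.dropLast.length = t.length + k := by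
              rw [List.length_dropLast]; omega
            have htdl : t <+: t'.dropLast := by
              rcases List.prefix_or_prefix_of_prefix hpre hdl with h | h
              · exact h
              · have hle := h.length_le
                exact (h.eq_of_length (by omega)) ▸ List.prefix_refl _
            have hdT : t'.dropLast ∈ T :=
              ⟨htdl, σ', hσ'p, hσ'g, hσ'i.trans (Cyl_mono hdl)⟩
            refine Set.mem_biUnion ⟨hdT, hdlen⟩ ?_
            exact ⟨t'.getLast hne, ⟨σ', hσ'p, hσ'g, by rw [hdrop]; exact hσ'i⟩, hdrop⟩
          apply Set.Finite.subset _ hsub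
          apply Set.Finite.biUnion ih
          rintro u ⟨⟨hu, _⟩, _⟩
          exact (hinf u hu).image _
    -- bound from the tree
    set gstar : ℕ → ℕ := fun j =>
      ((hlevel (j+1)).toFinset).sup (fun t' => t'.getD j 0) with hgstar
    -- bound from the bad nodes
    have hbad : Bdd (⋃ σ' ∈ {σ' | σ <+: σ' ∧ ¬ Good F σ'}, Img F σ') := by
      apply bdd_sUnion
      rintro σ' ⟨_, hbad⟩
      simpa [Good, not_not] using hbad
    rcases hbad with ⟨gbad, hgbad⟩
    apply hσ
    refine ⟨fun m => max (gbad m) (gstar m), ?_⟩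
    rintro _ ⟨x, hx, rfl⟩
    by_cases hgood : ∀ k, σ.length ≤ k → Good F (res x k)
    · -- all prefixes good: F x is a branch of T
      have hfj : ∀ j, t.length ≤ j → F x j ≤ gstar j := by
        intro j hj
        rcases cont_dec hF x (j+1) σ.length with ⟨k, hk, hdec⟩
        have hσpre : σ <+: res x k := by
          have := res_prefix x hk
          rwa [show res x σ.length = σ from hx] at this
        have himg : Img F (res x k) ⊆ Cyl (res (F x) (j+1)) := by
          rintro _ ⟨y, hy, rfl⟩
          exact res_mem_Cyl (n := j+1) (by rw [hdec y hy])
        have htpre : t <+: res (F x) (j+1) := by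
          apply prefix_of_mem_Cyl (ht ⟨x, hx, rfl⟩) (by omega)
        have hmem : res (F x) (j+1) ∈ {t' | t' ∈ T ∧ t'.length = j+1} :=
          ⟨⟨htpre, res x k, hσpre, hgood k hk, himg⟩, res_length _ _⟩
        have hmemF : res (F x) (j+1) ∈ (hlevel (j+1)).toFinset :=
          (Set.Finite.mem_toFinset _).2 hmem
        have : (res (F x) (j+1)).getD j 0 ≤ gstar j :=
          Finset.le_sup (f := fun t' => t'.getD j 0) hmemF
        rwa [getD_eq_getElem' _ (by simp [res_length]), res_getElem _ (by omega)] at this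
      apply Set.Finite.subset (Set.finite_Iio t.length)
      intro m hm
      simp only [Set.mem_setOf_eq] at hm
      by_contra hmt
      exact hm (le_max_of_le_right (hfj m (by simpa using hmt)))
    · -- some prefix bad: F x is bounded by gbad
      push_neg at hgood
      rcases hgood with ⟨k, hk, hbadk⟩
      have hσpre : σ <+: res x k := by
        have := res_prefix x hk
        rwa [show res x σ.length = σ from hx] at this
      have hfx : F x ∈ Img F (res x k) := ⟨x, res_mem_Cyl (List.prefix_refl _), rfl⟩
      have := hgbad (F x) (Set.mem_biUnion (show res x k ∈ {σ' | σ <+: σ' ∧ ¬ Good F σ'}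
        from ⟨hσpre, hbadk⟩) hfx)
      exact evle_of_le_from this (N := 0) (fun m _ => le_max_left _ _)

/-- data for one splitting step: `(t*, m, σc)` -/
def StepOK (F : (ℕ → ℕ) → (ℕ → ℕ)) (σ t : List ℕ)
    (d : List ℕ × (ℕ → ℕ) × (ℕ → List ℕ)) : Prop :=
  t <+: d.1 ∧ Function.Injective d.2.1 ∧
    ∀ n, σ <+: (d.2.2 n) ∧ σ.length < (d.2.2 n).length ∧ Good F (d.2.2 n) ∧
      Img F (d.2.2 n) ⊆ Cyl (d.1 ++ [d.2.1 n])

include hF in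
lemma splitting' {σ t : List ℕ} (h1 : Good F σ) (h2 : Img F σ ⊆ Cyl t) :
    ∃ d, StepOK F σ t d := by
  rcases splitting hF h1 h2 with ⟨tstar, htt, m, hm, σc, hσc⟩
  exact ⟨⟨tstar, m, σc⟩, htt, hm, hσc⟩

end Cont

section Construction

variable (F : (ℕ → ℕ) → (ℕ → ℕ)) (hF : Continuous F)

noncomputable def step (σ t : List ℕ) : List ℕ × (ℕ → ℕ) × (ℕ → List ℕ) :=
  if h : Good F σ ∧ Img F σ ⊆ Cyl t then Classical.choose (splitting' hF h.1 h.2)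
  else ⟨t, id, fun _ => σ⟩

lemma step_spec {σ t : List ℕ} (h1 : Good F σ) (h2 : Img F σ ⊆ Cyl t) :
    StepOK F σ t (step F hF σ t) := by
  rw [step, dif_pos ⟨h1, h2⟩]
  exact Classical.choose_spec (splitting' hF h1 h2)

/-- the pair `(σ_s, t_s)` assigned to a skeleton node `s` -/
noncomputable def node (s : List ℕ) : List ℕ × List ℕ :=
  List.reverseRecOn s (([] : List ℕ), ([] : List ℕ))
    (fun _s n ih =>
      ((step F hF ih.1 ih.2).2.2 n, (step F hF ih.1 ih.2).1 ++ [(step F hF ih.1 ih.2).2.1 n]))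

lemma node_nil : node F hF [] = ([], []) := by
  unfold node; rw [List.reverseRecOn_nil]

lemma node_concat (s : List ℕ) (n : ℕ) :
    node F hF (s ++ [n]) =
      ((step F hF (node F hF s).1 (node F hF s).2).2.2 n,
       (step F hF (node F hF s).1 (node F hF s).2).1 ++
         [(step F hF (node F hF s).1 (node F hF s).2).2.1 n]) := by
  unfold node; rw [List.reverseRecOn_concat]

variable {F}

/-- invariant along the construction -/
lemma node_inv (hgood : Good F []) :
    ∀ s : List ℕ, Good F (node F hF s).1 ∧ Img F (node F hF s).1 ⊆ Cyl (node F hF s).2 := by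
  intro s
  induction s using List.reverseRecOn with
  | nil =>
    rw [node_nil]
    refine ⟨hgood, ?_⟩
    rintro f -
    show res f 0 = []
    simp [res]
  | append_singleton s n ih =>
    have hspec := step_spec F hF ih.1 ih.2
    rw [node_concat]
    exact ⟨(hspec.2.2 n).2.2.1, (hspec.2.2 n).2.2.2⟩

lemma node_t_concat (hgood : Good F []) (s : List ℕ) (n : ℕ) :
    (node F hF s).2 <+: (node F hF (s ++ [n])).2 ∧
      (node F hF s).2.length < (node F hF (s ++ [n])).2.length ∧
      (node F hF s).1 <+: (node F hF (s ++ [n])).1 ∧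
      (node F hF s).1.length < (node F hF (s ++ [n])).1.length := by
  have hspec := step_spec F hF (node_inv hF hgood s).1 (node_inv hF hgood s).2
  rw [node_concat]
  refine ⟨?_, ?_, (hspec.2.2 n).1, (hspec.2.2 n).2.1⟩
  · exact hspec.1.trans (by simp)
  · have := hspec.1.length_le
    simp only [List.length_append, List.length_cons, List.length_nil]
    omega

lemma node_mono (hgood : Good F []) {s s' : List ℕ} (h : s <+: s') :
    (node F hF s).2 <+: (node F hF s').2 ∧ (node F hF s).1 <+: (node F hF s').1 ∧
      (s.length < s'.length →
        ((node F hF s).2.length < (node F hF s').2.length ∧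
         (node F hF s).1.length < (node F hF s').1.length)) := by
  induction s' using List.reverseRecOn with
  | nil =>
    rcases List.prefix_nil.1 h with rfl
    exact ⟨List.prefix_refl _, List.prefix_refl _, by simp⟩
  | append_singleton s' n ih =>
    rcases List.prefix_concat_iff.1 h with rfl | h'
    · exact ⟨List.prefix_refl _, List.prefix_refl _, by simp⟩
    · have h1 := ih h'
      have h2 := node_t_concat hF hgood s' n
      have hsl := h'.length_le
      refine ⟨h1.1.trans h2.1, h1.2.1.trans h2.2.2.1, fun _ => ?_⟩
      have := h1.1.length_le
      have := h1.2.1.length_le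
      constructor <;> omega

lemma node_len_ge (hgood : Good F []) (s : List ℕ) :
    s.length ≤ (node F hF s).2.length ∧ s.length ≤ (node F hF s).1.length := by
  induction s using List.reverseRecOn with
  | nil => simp
  | append_singleton s n ih =>
    have h2 := node_t_concat hF hgood s n
    simp only [List.length_append, List.length_cons, List.length_nil]
    omega

variable (F)

/-- The Miller tree: all prefixes of the `t_s`. -/
def ptree : Set (List ℕ) := {u | ∃ s, u <+: (node F hF s).2}

lemma ptree_tree : IsTree (ptree F hF) := by
  rintro u ⟨s, hu⟩ v hv
  exact ⟨s, hv.trans hu⟩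

variable {F}

lemma ptree_miller (hgood : Good F []) : IsMillerTree (ptree F hF) := by
  refine ⟨ptree_tree F hF, ⟨[], ⟨[], by simp⟩, fun s _ => Or.inr (List.nil_prefix)⟩, ?_⟩
  rintro u ⟨s, hu⟩
  have hinv := node_inv hF hgood s
  have hspec := step_spec F hF hinv.1 hinv.2
  set d := step F hF (node F hF s).1 (node F hF s).2 with hd
  refine ⟨d.1, ⟨s ++ [0], ?_⟩, hu.trans hspec.1, ?_⟩
  · rw [node_concat]
    exact List.prefix_append _ _
  · apply Set.infinite_of_injective_forall_mem (f := d.2.1) hspec.2.1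
    intro n
    refine ⟨s ++ [n], ?_⟩
    rw [node_concat]

lemma prefix_trichotomy (s s' : List ℕ) :
    s <+: s' ∨ s' <+: s ∨
      ∃ r a b u v, a ≠ b ∧ s = r ++ a :: u ∧ s' = r ++ b :: v := by
  induction s generalizing s' with
  | nil => exact Or.inl (List.nil_prefix)
  | cons x s1 ih =>
    cases s' with
    | nil => exact Or.inr (Or.inl (List.nil_prefix))
    | cons y s1' =>
      by_cases hxy : x = y
      · subst hxy
        rcases ih s1' with h | h | ⟨r, a, b, u, v, hab, h1, h2⟩
        · exact Or.inl (List.cons_prefix_cons.2 ⟨rfl, h⟩)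
        · exact Or.inr (Or.inl (List.cons_prefix_cons.2 ⟨rfl, h⟩))
        · exact Or.inr (Or.inr ⟨x :: r, a, b, u, v, hab, by simp [h1], by simp [h2]⟩)
      · exact Or.inr (Or.inr ⟨[], x, y, s1, s1', hxy, by simp, by simp⟩)

/-- value of `t_{s ++ [n]}` at position `|t*_s|` is `m_s n` -/
lemma node_concat_getElem (hgood : Good F []) (s : List ℕ) (n : ℕ) :
    ∀ (h : (step F hF (node F hF s).1 (node F hF s).2).1.length <
        (node F hF (s ++ [n])).2.length),
      (node F hF (s ++ [n])).2[(step F hF (node F hF s).1 (node F hF s).2).1.length] =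
        (step F hF (node F hF s).1 (node F hF s).2).2.1 n := by
  intro h
  have := node_concat F hF s n
  rw [List.getElem_of_eq (congrArg Prod.snd this) h]
  exact List.getElem_concat_length rfl _

/-- if `t_s` is a prefix of `t_{s'}` then `s` is a prefix of `s'` -/
lemma skel_of_prefix (hgood : Good F []) {s s' : List ℕ}
    (h : (node F hF s).2 <+: (node F hF s').2) : s <+: s' := by
  rcases prefix_trichotomy s s' with h1 | h1 | ⟨r, a, b, u, v, hab, rfl, rfl⟩
  · exact h1
  · rcases lt_or_ge s'.length s.length with hlt | hle
    · exfalso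
      have := (node_mono hF hgood h1).2.2 hlt
      have := h.length_le
      omega
    · have := h1.eq_of_length (le_antisymm h1.length_le hle)
      exact this ▸ List.prefix_refl _
  · exfalso
    have hra : r ++ [a] <+: r ++ a :: u := by
      simpa using (List.prefix_append (r ++ [a]) u)
    have hrb : r ++ [b] <+: r ++ b :: v := by
      simpa using (List.prefix_append (r ++ [b]) v)
    have hma := node_mono hF hgood hra
    have hmb := node_mono hF hgood hrb
    set j := (step F hF (node F hF r).1 (node F hF r).2).1.length with hj
    have hja : j < (node F hF (r ++ [a])).2.length := by
      have := node_concat F hF r a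
      rw [congrArg Prod.snd this]
      simp [hj]
    have hjb : j < (node F hF (r ++ [b])).2.length := by
      have := node_concat F hF r b
      rw [congrArg Prod.snd this]
      simp [hj]
    have hras := hma.1.length_le
    have hrbs := hmb.1.length_le
    have hval_a : (node F hF (r ++ a :: u)).2[j]'(by omega) =
        (step F hF (node F hF r).1 (node F hF r).2).2.1 a := by
      rw [← hma.1.getElem hja]
      exact node_concat_getElem hF hgood r a hja
    have hval_b : (node F hF (r ++ b :: v)).2[j]'(by omega) =
        (step F hF (node F hF r).1 (node F hF r).2).2.1 b := by
      rw [← hmb.1.getElem hjb]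
      exact node_concat_getElem hF hgood r b hjb
    have hspec := step_spec F hF (node_inv hF hgood r).1 (node_inv hF hgood r).2
    have hvv : (node F hF (r ++ a :: u)).2[j]'(by omega) =
        (node F hF (r ++ b :: v)).2[j]'(by omega) := h.getElem _
    rw [hval_a, hval_b] at hvv
    exact hab (hspec.2.1 hvv)

lemma chain_succ (hgood : Good F []) {η : ℕ → ℕ}
    (hη : ∀ n, ∃ s', res η n <+: (node F hF s').2)
    (s : List ℕ) (hs : η ∈ Cyl (node F hF s).2) :
    ∃ n, η ∈ Cyl (node F hF (s ++ [n])).2 := by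
  have hinv := node_inv hF hgood s
  have hspec := step_spec F hF hinv.1 hinv.2
  set d := step F hF (node F hF s).1 (node F hF s).2 with hd
  set j := d.1.length with hj
  have htsj : (node F hF s).2.length ≤ j := hspec.1.length_le
  have claim : ∀ ℓ, j + 1 ≤ ℓ → ∃ n s₁, s ++ [n] <+: s₁ ∧
      res η ℓ <+: (node F hF s₁).2 ∧ d.2.1 n = η j := by
    intro ℓ hℓ
    obtain ⟨s₁, h1⟩ := hη ℓ
    have hts : (node F hF s).2 <+: res η ℓ := by
      have h' : res η (node F hF s).2.length = (node F hF s).2 := hs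
      have := res_prefix η (show (node F hF s).2.length ≤ ℓ by omega)
      rwa [h'] at this
    have h2 : (node F hF s).2 <+: (node F hF s₁).2 := hts.trans h1
    have hss1 : s <+: s₁ := skel_of_prefix hF hgood h2
    have hlen1 : ℓ ≤ (node F hF s₁).2.length := by
      have := h1.length_le
      simpa [res_length] using this
    have hne : s ≠ s₁ := by
      rintro rfl
      omega
    obtain ⟨w, rfl⟩ := hss1
    cases w with
    | nil => exact absurd (by simp) hne
    | cons n u =>
      have hpre1 : s ++ [n] <+: s ++ n :: u := by
        refine ⟨u, by simp⟩
      have hj1 : j < (node F hF (s ++ [n])).2.length := by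
        have := node_concat F hF s n
        rw [congrArg Prod.snd this]
        simp [hd, hj]
      have hval : (node F hF (s ++ [n])).2[j]'hj1 = d.2.1 n :=
        node_concat_getElem hF hgood s n hj1
      have hmono := (node_mono hF hgood hpre1).1
      have hjs1 : j < (node F hF (s ++ n :: u)).2.length := by
        have := hmono.length_le
        omega
      have hv1 : (node F hF (s ++ n :: u)).2[j]'hjs1 = d.2.1 n := by
        rw [← hmono.getElem hj1, hval]
      have hv2 : (node F hF (s ++ n :: u)).2[j]'hjs1 = η j := by
        rw [← h1.getElem (by simp [res_length]; omega : j < (res η ℓ).length)]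
        exact res_getElem η (by omega)
      exact ⟨n, s ++ n :: u, hpre1, h1, by rw [← hv1, hv2]⟩
  obtain ⟨n, s₁, _, _, hvn⟩ := claim (j + 1) (le_refl _)
  set ℓ' := max (j + 1) (node F hF (s ++ [n])).2.length with hℓ'
  obtain ⟨n', s₂, hpre2, hres2, hvn'⟩ := claim ℓ' (le_max_left _ _)
  have hnn : n' = n := hspec.2.1 (by rw [hvn, hvn'])
  subst hnn
  have hmono2 := (node_mono hF hgood hpre2).1
  have hcomp := List.prefix_or_prefix_of_prefix hmono2 hres2
  have hlenle : (node F hF (s ++ [n'])).2.length ≤ ℓ' := le_max_right _ _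
  rcases hcomp with h | h
  · exact ⟨n', res_mem_Cyl h⟩
  · have hlen2 : (res η ℓ').length ≤ (node F hF (s ++ [n'])).2.length := h.length_le
    rw [res_length] at hlen2
    have heq : res η ℓ' = (node F hF (s ++ [n'])).2 :=
      h.eq_of_length (by rw [res_length]; omega)
    refine ⟨n', res_mem_Cyl (n := ℓ') ?_⟩
    rw [← heq]

lemma branches_subset (hgood : Good F []) :
    Branches (ptree F hF) ⊆ Set.range F := by
  intro η hη
  have hη' : ∀ n, ∃ s', res η n <+: (node F hF s').2 := fun n => hη n
  have hnil : η ∈ Cyl (node F hF []).2 := by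
    show res η (node F hF []).2.length = (node F hF []).2
    rw [node_nil]
    simp [res]
  have hstep : ∀ s, η ∈ Cyl (node F hF s).2 → ∃ n, η ∈ Cyl (node F hF (s ++ [n])).2 :=
    fun s hs => chain_succ hF hgood hη' s hs
  choose nx hnx using hstep
  let b : ℕ → {s : List ℕ // η ∈ Cyl (node F hF s).2} := fun k =>
    Nat.rec ⟨[], hnil⟩ (fun _ ih => ⟨ih.1 ++ [nx ih.1 ih.2], hnx ih.1 ih.2⟩) k
  have hbsucc : ∀ k, (b (k+1)).1 = (b k).1 ++ [nx (b k).1 (b k).2] := fun k => rfl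
  have hblen : ∀ k, (b k).1.length = k := by
    intro k
    induction k with
    | zero => rfl
    | succ k ih => rw [hbsucc, List.length_append, ih]; simp
  have hbpre : ∀ k k', k ≤ k' → (b k).1 <+: (b k').1 := by
    intro k k' hk
    induction k', hk using Nat.le_induction with
    | base => exact List.prefix_refl _
    | succ k' hk ih =>
      rw [hbsucc]
      exact ih.trans (List.prefix_append _ _)
  set x : ℕ → ℕ := fun i => (node F hF (b (i+1)).1).1.getD i 0 with hx
  have hσlen : ∀ k, k ≤ (node F hF (b k).1).1.length := by
    intro k
    have := (node_len_ge hF hgood (b k).1).2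
    rwa [hblen] at this
  have hxk : ∀ k, x ∈ Cyl (node F hF (b k).1).1 := by
    intro k
    rw [mem_Cyl_iff]
    intro i hi
    have hi1 : i < (node F hF (b (i+1)).1).1.length := lt_of_lt_of_le (by omega) (hσlen (i+1))
    have hxi : x i = (node F hF (b (i+1)).1).1[i]'hi1 := getD_eq_getElem' _ hi1
    rcases le_or_gt (i+1) k with h | h
    · have hm := (node_mono hF hgood (hbpre _ _ h)).2.1
      rw [hxi, hm.getElem hi1]
    · have hm := (node_mono hF hgood (hbpre _ _ (by omega : k ≤ i+1))).2.1
      rw [hxi, ← hm.getElem hi]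
  have hFx : ∀ k, F x ∈ Cyl (node F hF (b k).1).2 := fun k =>
    (node_inv hF hgood (b k).1).2 ⟨x, hxk k, rfl⟩
  refine ⟨x, funext fun i => ?_⟩
  have htlen : i < (node F hF (b (i+1)).1).2.length := by
    have h4 := (node_len_ge hF hgood (b (i+1)).1).1
    have h3 := hblen (i+1)
    omega
  have h1 := mem_Cyl_iff.1 (hFx (i+1)) i htlen
  have h2 := mem_Cyl_iff.1 (show η ∈ Cyl (node F hF (b (i+1)).1).2 from (b (i+1)).2) i htlen
  rw [h1, h2]

end Construction
end KM

section Forward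

lemma miller_unbounded {p : Set (List ℕ)} (hp : IsMillerTree p) (g : ℕ → ℕ) :
    ∃ η ∈ Branches p, ¬ EvLE η g := by
  classical
  obtain ⟨htree, ⟨st, hst, -⟩, hsplit⟩ := hp
  have hstep : ∀ u, u ∈ p → ∃ v, v ∈ p ∧ u <+: v ∧ u.length < v.length ∧
      ∃ i, u.length ≤ i ∧ ∃ h : i < v.length, g i < v[i] := by
    intro u hu
    obtain ⟨t, htp, hut, hinf⟩ := hsplit u hu
    obtain ⟨m, hm, hgm⟩ := hinf.exists_gt (g t.length)
    have hlen : u.length ≤ t.length := hut.length_le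
    refine ⟨t ++ [m], hm, hut.trans (List.prefix_append _ _), by simp; omega,
      t.length, hlen, by simp, ?_⟩
    rw [List.getElem_concat_length rfl]
    exact hgm
  choose nxt hnxt1 hnxt2 hnxt3 hnxt4 using hstep
  let u : ℕ → {l : List ℕ // l ∈ p} := fun k =>
    Nat.rec ⟨st, hst⟩ (fun _ ih => ⟨nxt ih.1 ih.2, hnxt1 ih.1 ih.2⟩) k
  have husucc : ∀ k, (u (k+1)).1 = nxt (u k).1 (u k).2 := fun k => rfl
  have hulen : ∀ k, k ≤ (u k).1.length := by
    intro k
    induction k with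
    | zero => omega
    | succ k ih =>
      have := hnxt3 (u k).1 (u k).2
      rw [husucc]
      omega
  have huchain : ∀ k k', k ≤ k' → (u k).1 <+: (u k').1 := by
    intro k k' hk
    induction k', hk using Nat.le_induction with
    | base => exact List.prefix_refl _
    | succ k' hk ih =>
      rw [husucc]
      exact ih.trans (hnxt2 (u k').1 (u k').2)
  set η : ℕ → ℕ := fun i => (u (i+1)).1.getD i 0 with hη
  have hval : ∀ k i (hik : i < (u k).1.length), η i = (u k).1[i]'hik := by
    intro k i hik
    have hi1 : i < (u (i+1)).1.length := lt_of_lt_of_le (by omega) (hulen (i+1))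
    have : η i = (u (i+1)).1[i]'hi1 := by
      show (u (i+1)).1.getD i 0 = _
      simp [List.getD, List.getElem?_eq_getElem hi1]
    rw [this]
    rcases le_or_gt (i+1) k with h | h
    · exact (huchain _ _ h).getElem hi1
    · exact ((huchain _ _ (by omega : k ≤ i+1)).getElem hik).symm
  have hbranch : η ∈ Branches p := by
    intro n
    apply htree (u n).1 (u n).2
    apply prefix_ext (by simpa [res_length] using hulen n)
    intro i hi
    have hin : i < n := by simpa using hi
    have hiu : i < (u n).1.length := lt_of_lt_of_le hin (hulen n)
    have : ((List.range n).map η)[i]'(by simpa using hin) = η i := by simp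
    rw [this]
    exact hval n i hiu
  refine ⟨η, hbranch, ?_⟩
  intro hfin
  obtain ⟨N, hN⟩ := hfin.bddAbove
  obtain ⟨i, hiu, hiv, hgi⟩ := hnxt4 (u (N+1)).1 (u (N+1)).2
  have hiv' : i < (u (N+1+1)).1.length := by rw [husucc (N+1)]; exact hiv
  have hgi' : g i < (u (N+1+1)).1[i]'hiv' := by
    rw [List.getElem_of_eq (husucc (N+1)) hiv']
    exact hgi
  have hiN : N + 1 ≤ i := le_trans (hulen (N+1)) hiu
  have hηi : η i = (u (N+1+1)).1[i]'hiv' := hval (N+2) i hiv'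
  have : i ∈ {n : ℕ | ¬ η n ≤ g n} := by
    simp only [Set.mem_setOf_eq, not_le]
    rw [hηi]
    exact hgi'
  have := hN this
  omega

end Forward

/-- Lemma 2.4 (Kechris): an analytic `A ⊆ ᵚω` contains all branches of some
Miller tree iff `A` is unbounded in `(ᵚω, ≤*)`. -/
theorem kechris_miller (A : Set (ℕ → ℕ)) (hA : MeasureTheory.AnalyticSet A) :
    (∃ p, IsMillerTree p ∧ Branches p ⊆ A) ↔
      ¬ ∃ g : ℕ → ℕ, ∀ f ∈ A, EvLE f g := by
  constructor
  · rintro ⟨p, hp, hsub⟩ ⟨g, hg⟩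
    obtain ⟨η, hηp, hηg⟩ := miller_unbounded hp g
    exact hηg (hg η (hsub hηp))
  · intro hunb
    have hAne : A.Nonempty := by
      by_contra h
      rw [Set.not_nonempty_iff_eq_empty] at h
      subst h
      exact hunb ⟨fun _ => 0, by simp⟩
    rw [MeasureTheory.AnalyticSet] at hA
    rcases hA with h | ⟨F, hF, hFA⟩
    · rw [h] at hAne
      exact absurd hAne (by simp)
    · have hgood : Good F [] := by
        rintro ⟨g, hg⟩
        apply hunb
        refine ⟨g, fun f hf => ?_⟩
        apply hg
        rw [← hFA] at hf
        obtain ⟨x, rfl⟩ := hf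
        exact ⟨x, show res x 0 = [] by simp [res], rfl⟩
      exact ⟨ptree F hF, ptree_miller hF hgood,
        fun η hη => hFA ▸ (branches_subset hF hgood hη)⟩
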